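/- Let f:[0,1]→[0,1] be a unimodal map symmetric about its critical point c, let q be the orientation-reversing fixed point of f, let I^1 = (q̂, q), and let {I^k} be the principal nest starting from I^1. Let S_k denote the Fibonacci numbers S_0 = 1, S_1 = 2, S_{k+1} = S_k + S_{k−1}. Suppose that for every k ≥ 1: (1) I^k ∩ D(I^k) has exactly two connected components intersecting orb^+(c), denoted I_0^k and I_1^k with c ∈ I_0^k; (2) R_{I^k}|_{I_0^k} = f^{S_{k+1}} and R_{I^k}|_{I_1^k} = f^{S_k}; and (3) f^{S_k}(c) ∉ I^k. Then f is a Fibonacci map. -/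

import Mathlib

/-!
Write `d k` for the distance from `c` to a nearest `k`-th preimage of `c`. Every level of the
principal nest is a symmetric nice interval `Iⁿ = (c - rₙ, c + rₙ)`. Points of `Iⁿ⁺¹` first return
to `Iⁿ ∋ c` at time `S (n+1)`, so `Iⁿ⁺¹` contains no preimage of `c` of order `S n`, i.e.
`rₙ₊₁ ≤ d (S n)`. Conversely `f^(S n)` is monotone on `[c, c + rₙ]`, and since the branch returning
at time `S n` hits `Iⁿ` while neither `f^(S n) c` nor `f^(S n) (c + rₙ)` lies in `Iⁿ`, the image of
`[c, c + rₙ]` straddles `c`: there is a preimage of order `S n` inside `Iⁿ`. Hence `d (S n)` is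
strictly decreasing.

For minimality, let `x` be a preimage of order `k`, `S i < k < S (i+1)`, closer to `c` than
`d (S i)`, on the same side as a nearest preimage `z` of order `S i`. By induction on `k`,
`f^(S i)` is monotone on `[c, z]`, so `f^(S i) x` is no farther from `c` than `f^(S i) c ∈ Iⁱ⁻¹`,
hence closer than `d (S (i-2))`; but it is a preimage of order `k - S i < S (i-1)`, contradicting
the induction hypothesis.
-/

noncomputable section

/-- The Fibonacci numbers `S 0 = 1`, `S 1 = 2`, `S (k+2) = S (k+1) + S k`. -/
def fibS : ℕ → ℕ
  | 0 => 1
  | 1 => 2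
  | n + 2 => fibS (n + 1) + fibS n

/-- `f : [0,1] → [0,1]` is unimodal with critical point `c`: continuous, maps `[0,1]` into
itself, `f 0 = f 1 = 0`, `c ∈ (0,1)`, strictly increasing on `[0,c]`, strictly decreasing
on `[c,1]`. -/
def IsUnimodal (f : ℝ → ℝ) (c : ℝ) : Prop :=
  ContinuousOn f (Set.Icc 0 1) ∧ Set.MapsTo f (Set.Icc 0 1) (Set.Icc 0 1) ∧
  f 0 = 0 ∧ f 1 = 0 ∧ c ∈ Set.Ioo (0 : ℝ) 1 ∧
  StrictMonoOn f (Set.Icc 0 c) ∧ StrictAntiOn f (Set.Icc c 1)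

/-- `f` is symmetric about `c`: `f (2c - x) = f x` whenever both points lie in `[0,1]`
(the symmetric point of `x` is `x̂ = 2c - x`). -/
def SymmetricAbout (f : ℝ → ℝ) (c : ℝ) : Prop :=
  ∀ x ∈ Set.Icc (0 : ℝ) 1, 2 * c - x ∈ Set.Icc (0 : ℝ) 1 → f (2 * c - x) = f x

/-- The distance from `c` to a nearest `k`-th preimage `c₋ₖ` of `c` in `[0,1]`,
i.e. `|c₋ₖ - c| = |c₋ₖ|`. -/
def preimDist (f : ℝ → ℝ) (c : ℝ) (k : ℕ) : ℝ :=
  sInf ((fun x => |x - c|) '' {x | x ∈ Set.Icc (0 : ℝ) 1 ∧ f^[k] x = c})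

/-- `S` is the sequence of cutting times of `f`: `S 0 = 1`, and `S (i+1)` is the least
`k ≥ S i` for which the nearest `k`-th preimage `c₋ₖ` of `c` lies in the symmetric open
interval `(c₋ₛᵢ, (c₋ₛᵢ)^)`, i.e. `c₋ₖ` exists and is strictly closer to `c` than `c₋ₛᵢ`. -/
def IsCuttingSeq (f : ℝ → ℝ) (c : ℝ) (S : ℕ → ℕ) : Prop :=
  S 0 = 1 ∧ ∀ i, IsLeast {k | S i ≤ k ∧
    ({x | x ∈ Set.Icc (0 : ℝ) 1 ∧ f^[k] x = c}).Nonempty ∧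
    preimDist f c k < preimDist f c (S i)} (S (i + 1))

/-- A Fibonacci map: a symmetric unimodal map whose cutting times are exactly the
Fibonacci numbers `1, 2, 3, 5, 8, …`. -/
def IsFibonacciMap (f : ℝ → ℝ) (c : ℝ) : Prop :=
  IsUnimodal f c ∧ SymmetricAbout f c ∧ IsCuttingSeq f c fibS

/-- The entry domain `D(J) = {x : f^k x ∈ J for some k ≥ 1}`. -/
def entryDom (f : ℝ → ℝ) (J : Set ℝ) : Set ℝ := {x | ∃ k, 1 ≤ k ∧ f^[k] x ∈ J}

/-- The first return time of `x` to `J` equals `m`: `f^[m] x ∈ J` and no earlier positive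
iterate of `x` lies in `J`; thus the first return map satisfies `R_J x = f^[m] x`. -/
def ReturnTimeEq (f : ℝ → ℝ) (J : Set ℝ) (x : ℝ) (m : ℕ) : Prop :=
  1 ≤ m ∧ f^[m] x ∈ J ∧ ∀ k, 1 ≤ k → k < m → f^[k] x ∉ J

/-- `C` is a return domain of `J`: a connected component of `J ∩ D(J)`. -/
def IsReturnDomain (f : ℝ → ℝ) (J C : Set ℝ) : Prop :=
  ∃ x ∈ J ∩ entryDom f J, C = connectedComponentIn (J ∩ entryDom f J) x

/-- The forward orbit of the critical point, `orb⁺(c) = {f^k c : k ≥ 1}`. -/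
def posOrbit (f : ℝ → ℝ) (c : ℝ) : Set ℝ := {y | ∃ k, 1 ≤ k ∧ f^[k] c = y}

open Set Metric

lemma one_le_fibS : ∀ n, 1 ≤ fibS n
  | 0 => le_rfl
  | 1 => one_le_two
  | n + 2 => (one_le_fibS (n + 1)).trans (Nat.le_add_right _ _)

lemma fibS_lt_fibS_succ : ∀ n, fibS n < fibS (n + 1)
  | 0 => one_lt_two
  | n + 1 => Nat.lt_add_of_pos_right (one_le_fibS n)

lemma fibS_strictMono : StrictMono fibS := strictMono_nat_of_lt_succ fibS_lt_fibS_succ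

lemma exists_fibS_le_lt {k : ℕ} (hk : 1 ≤ k) : ∃ i, fibS i ≤ k ∧ k < fibS (i + 1) := by
  have hex : ∃ i, k < fibS (i + 1) := ⟨k, fibS_strictMono.id_le (k + 1)⟩
  refine ⟨Nat.find hex, ?_, Nat.find_spec hex⟩
  rcases h : Nat.find hex with _ | i
  · exact hk
  · exact not_lt.1 (Nat.find_min hex (h ▸ Nat.lt_succ_self i))

lemma exists_mem_uIoo_eq {α δ : Type*} [ConditionallyCompleteLinearOrder α] [TopologicalSpace α]
    [OrderTopology α] [DenselyOrdered α] [LinearOrder δ] [TopologicalSpace δ]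
    [OrderClosedTopology δ] {g : α → δ} {u v : α} {y : δ} (hg : ContinuousOn g (uIcc u v))
    (hy : y ∈ uIcc (g u) (g v)) (hu : g u ≠ y) (hv : g v ≠ y) : ∃ x ∈ uIoo u v, g x = y := by
  obtain ⟨x, hx, rfl⟩ := intermediate_value_uIcc hg hy
  refine ⟨x, ?_, rfl⟩
  rcases le_total u v with h | h
  · rw [uIcc_of_le h] at hx
    rw [uIoo_of_le h]
    exact ⟨hx.1.lt_of_ne (by rintro rfl; exact hu rfl), hx.2.lt_of_ne (by rintro rfl; exact hv rfl)⟩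
  · rw [uIcc_of_ge h] at hx
    rw [uIoo_of_ge h]
    exact ⟨hx.1.lt_of_ne (by rintro rfl; exact hv rfl), hx.2.lt_of_ne (by rintro rfl; exact hu rfl)⟩

lemma center_mem_uIcc_of_mem_ball {a b c r y : ℝ} (hy : y ∈ uIcc a b) (hyr : y ∈ ball c r)
    (ha : a ∉ ball c r) (hb : b ∉ ball c r) : c ∈ uIcc a b := by
  rw [mem_ball, Real.dist_eq] at hyr
  rw [mem_ball, Real.dist_eq, not_lt] at ha hb
  obtain ⟨hy1, hy2⟩ := abs_lt.1 hyr
  rcases le_total a b with hab | hab <;>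
    simp only [uIcc_of_le, uIcc_of_ge, hab, mem_Icc] at hy ⊢ <;>
    rcases le_abs.1 ha with ha | ha <;> rcases le_abs.1 hb with hb | hb <;>
    constructor <;> linarith

lemma IsOpen.eq_Ioo_csInf_csSup {C : Set ℝ} (hC : IsOpen C) (hconn : IsConnected C)
    (hb : BddBelow C) (ha : BddAbove C) : C = Ioo (sInf C) (sSup C) := by
  refine Subset.antisymm (fun y hy => ⟨(csInf_le hb hy).lt_of_ne ?_, (le_csSup ha hy).lt_of_ne ?_⟩)
    (hconn.Ioo_csInf_csSup_subset hb ha)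
  · rintro h
    obtain ⟨z, hz, hzC⟩ := Filter.Eventually.exists_lt (p := (· ∈ C)) (hC.mem_nhds (h ▸ hy))
    exact hz.not_ge (csInf_le hb hzC)
  · rintro h
    obtain ⟨z, hz, hzC⟩ := Filter.Eventually.exists_gt (p := (· ∈ C)) (hC.mem_nhds (h ▸ hy))
    exact hz.not_ge (le_csSup ha hzC)

lemma IsOpen.exists_connectedComponentIn_eq_ball {S : Set ℝ} {c : ℝ} (hS : IsOpen S)
    (hb : BddBelow S) (ha : BddAbove S) (hsymm : ∀ y ∈ S, 2 * c - y ∈ S) (hc : c ∈ S) :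
    ∃ ρ, 0 < ρ ∧ connectedComponentIn S c = ball c ρ := by
  set C := connectedComponentIn S c
  have hCS : C ⊆ S := connectedComponentIn_subset S c
  have hcC : c ∈ C := mem_connectedComponentIn hc
  have hCeq : C = Ioo (sInf C) (sSup C) := hS.connectedComponentIn.eq_Ioo_csInf_csSup
    (isConnected_connectedComponentIn_iff.2 hc) (hb.mono hCS) (ha.mono hCS)
  have hrefl : (fun y => 2 * c - y) '' C ⊆ C :=
    (isPreconnected_connectedComponentIn.image _
      (continuous_const.sub continuous_id).continuousOn).subset_connectedComponentIn
      ⟨c, hcC, show 2 * c - c = c by ring⟩ (by rintro _ ⟨y, hy, rfl⟩; exact hsymm y (hCS hy))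
  rw [hCeq, image_const_sub_Ioo] at hrefl
  rw [hCeq] at hcC ⊢
  obtain ⟨h1, h2⟩ := (Ioo_subset_Ioo_iff (by linarith [hcC.1, hcC.2])).1 hrefl
  refine ⟨sSup C - c, by linarith [hcC.2], ?_⟩
  rw [Real.ball_eq_Ioo]
  congr 1 <;> linarith

namespace IsUnimodal

variable {f : ℝ → ℝ} {c : ℝ}

lemma center_mem (hf : IsUnimodal f c) : c ∈ Ioo (0 : ℝ) 1 := hf.2.2.2.2.1

lemma strictMonoOn (hf : IsUnimodal f c) : StrictMonoOn f (Icc 0 c) := hf.2.2.2.2.2.1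

lemma strictAntiOn (hf : IsUnimodal f c) : StrictAntiOn f (Icc c 1) := hf.2.2.2.2.2.2

lemma mapsTo_iterate (hf : IsUnimodal f c) (k : ℕ) : MapsTo f^[k] (Icc 0 1) (Icc 0 1) :=
  hf.2.1.iterate k

lemma continuousOn_iterate (hf : IsUnimodal f c) (k : ℕ) : ContinuousOn f^[k] (Icc 0 1) :=
  hf.1.iterate hf.2.1 k

lemma eq_half (hf : IsUnimodal f c) (hsymm : SymmetricAbout f c) : c = 1 / 2 := by
  obtain ⟨-, -, h0, h1, ⟨hc0, hc1⟩, hmono, hanti⟩ := hf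
  rcases le_or_gt c (1 / 2) with hc | hc
  · have h := hsymm 0 ⟨le_rfl, zero_le_one⟩ ⟨by linarith, by linarith⟩
    rw [sub_zero, h0, ← h1] at h
    have := hanti.injOn ⟨by linarith, by linarith⟩ ⟨hc1.le, le_rfl⟩ h
    linarith
  · have h := hsymm 1 ⟨zero_le_one, le_rfl⟩ ⟨by linarith, by linarith⟩
    rw [h1, ← h0] at h
    have := hmono.injOn ⟨by linarith, by linarith⟩ ⟨le_rfl, hc0.le⟩ h
    linarith

lemma reflect_mem_Icc (hf : IsUnimodal f c) (hsymm : SymmetricAbout f c) {x : ℝ}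
    (hx : x ∈ Icc (0 : ℝ) 1) : 2 * c - x ∈ Icc (0 : ℝ) 1 := by
  rw [hf.eq_half hsymm]
  constructor <;> linarith [hx.1, hx.2]

lemma iterate_reflect (hf : IsUnimodal f c) (hsymm : SymmetricAbout f c) {x : ℝ}
    (hx : x ∈ Icc (0 : ℝ) 1) {k : ℕ} (hk : 1 ≤ k) : f^[k] (2 * c - x) = f^[k] x := by
  obtain ⟨k, rfl⟩ := Nat.exists_eq_add_of_le' hk
  rw [Function.iterate_succ_apply, Function.iterate_succ_apply,
    hsymm x hx (hf.reflect_mem_Icc hsymm hx)]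

lemma monotoneOn_or_antitoneOn (hf : IsUnimodal f c) {a b : ℝ} (ha : a ∈ Icc (0 : ℝ) 1)
    (hb : b ∈ Icc (0 : ℝ) 1) (hc : c ∉ uIoo a b) :
    MonotoneOn f (uIcc a b) ∨ AntitoneOn f (uIcc a b) := by
  rcases not_and_or.1 hc with h | h
  · exact Or.inr (hf.strictAntiOn.antitoneOn.mono (Icc_subset_Icc (not_lt.1 h) (sup_le ha.2 hb.2)))
  · exact Or.inl (hf.strictMonoOn.monotoneOn.mono (Icc_subset_Icc (le_inf ha.1 hb.1) (not_lt.1 h)))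

lemma monotoneOn_or_antitoneOn_iterate (hf : IsUnimodal f c) {u v : ℝ} (hu : u ∈ Icc (0 : ℝ) 1)
    (hv : v ∈ Icc (0 : ℝ) 1) {m : ℕ} (h : ∀ x ∈ uIoo u v, ∀ j < m, f^[j] x ≠ c) :
    MonotoneOn f^[m] (uIcc u v) ∨ AntitoneOn f^[m] (uIcc u v) := by
  induction m with
  | zero => exact Or.inl monotoneOn_id
  | succ m ih =>
    have hg := ih fun x hx j hj => h x hx j (Nat.lt_succ_of_lt hj)
    have hmaps : MapsTo f^[m] (uIcc u v) (uIcc (f^[m] u) (f^[m] v)) :=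
      hg.elim MonotoneOn.mapsTo_uIcc AntitoneOn.mapsTo_uIcc
    have hc : c ∉ uIoo (f^[m] u) (f^[m] v) := fun hc => by
      obtain ⟨x, hx, hfx⟩ := exists_mem_uIoo_eq
        ((hf.continuousOn_iterate m).mono (uIcc_subset_Icc hu hv)) (uIoo_subset_uIcc_self hc)
        (fun h => left_notMem_uIoo (h ▸ hc)) (fun h => right_notMem_uIoo (h ▸ hc))
      exact h x hx m (Nat.lt_succ_self m) hfx
    rw [Function.iterate_succ']
    rcases hf.monotoneOn_or_antitoneOn (hf.mapsTo_iterate m hu) (hf.mapsTo_iterate m hv) hc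
      with h1 | h1 <;> rcases hg with h2 | h2
    · exact Or.inl (h1.comp h2 hmaps)
    · exact Or.inr (h1.comp_AntitoneOn h2 hmaps)
    · exact Or.inr (h1.comp_MonotoneOn h2 hmaps)
    · exact Or.inl (h1.comp h2 hmaps)

lemma exists_iterate_eq (hf : IsUnimodal f c) (hc : c ≤ f c) :
    ∀ k, ∃ x ∈ Icc 0 c, f^[k] x = c
  | 0 => ⟨c, right_mem_Icc.2 hf.center_mem.1.le, rfl⟩
  | k + 1 => by
    obtain ⟨x, hx, hfx⟩ := exists_iterate_eq hf hc k
    obtain ⟨y, hy, rfl⟩ := intermediate_value_Icc hf.center_mem.1.le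
      (hf.1.mono (Icc_subset_Icc le_rfl hf.center_mem.2.le))
      ⟨by rw [hf.2.2.1]; exact hx.1, hx.2.trans hc⟩
    exact ⟨y, hy, by rwa [Function.iterate_succ_apply]⟩

lemma exists_preimDist_eq (hf : IsUnimodal f c) {k : ℕ}
    (hne : {x | x ∈ Icc (0 : ℝ) 1 ∧ f^[k] x = c}.Nonempty) :
    ∃ z ∈ Icc (0 : ℝ) 1, f^[k] z = c ∧ |z - c| = preimDist f c k := by
  have hcpt : IsCompact {x | x ∈ Icc (0 : ℝ) 1 ∧ f^[k] x = c} :=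
    isCompact_Icc.of_isClosed_subset ((hf.continuousOn_iterate k).preimage_isClosed_of_isClosed
      isClosed_Icc isClosed_singleton) fun _ hx => hx.1
  obtain ⟨z, hz, hzd⟩ := (hcpt.image (continuous_sub_right c).abs).sInf_mem (hne.image _)
  exact ⟨z, hz.1, hz.2, hzd⟩

lemma exists_preimDist_eq_right (hf : IsUnimodal f c) (hsymm : SymmetricAbout f c) {k : ℕ}
    (hk : 1 ≤ k) (hne : {x | x ∈ Icc (0 : ℝ) 1 ∧ f^[k] x = c}.Nonempty) :
    ∃ z ∈ Icc (0 : ℝ) 1, f^[k] z = c ∧ c ≤ z ∧ z - c = preimDist f c k := by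
  obtain ⟨z, hz, hfz, hd⟩ := hf.exists_preimDist_eq hne
  rcases le_total c z with h | h
  · exact ⟨z, hz, hfz, h, by rwa [abs_of_nonneg (sub_nonneg.2 h)] at hd⟩
  · refine ⟨2 * c - z, hf.reflect_mem_Icc hsymm hz, by rwa [hf.iterate_reflect hsymm hz hk],
      by linarith, ?_⟩
    rw [← hd, abs_of_nonpos (sub_nonpos.2 h)]
    ring

lemma isOpen_inter_entryDom (hf : IsUnimodal f c) {J : Set ℝ} (hJ : IsOpen J)
    (hJ1 : J ⊆ Icc 0 1) : IsOpen (J ∩ entryDom f J) := by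
  have : J ∩ entryDom f J = ⋃ k ∈ Ici 1, J ∩ f^[k] ⁻¹' J := by
    ext x
    simp [entryDom]
  rw [this]
  exact isOpen_biUnion fun k _ => ((hf.continuousOn_iterate k).mono hJ1).isOpen_inter_preimage hJ hJ

lemma exists_connectedComponentIn_eq_ball (hf : IsUnimodal f c) (hsymm : SymmetricAbout f c)
    {r : ℝ} (hr : 0 < r) (hJ : ball c r ⊆ Icc 0 1)
    (hnice : ∀ j, 1 ≤ j → f^[j] (c + r) ∉ ball c r) (hc : c ∈ entryDom f (ball c r)) :
    ∃ ρ, 0 < ρ ∧ ρ ≤ r ∧ connectedComponentIn (ball c r ∩ entryDom f (ball c r)) c = ball c ρ ∧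
      ∀ j, 1 ≤ j → f^[j] (c + ρ) ∉ ball c r := by
  set S := ball c r ∩ entryDom f (ball c r)
  have hSsymm : ∀ y ∈ S, 2 * c - y ∈ S := by
    rintro y ⟨hy, k, hk, hfy⟩
    refine ⟨?_, k, hk, by rwa [hf.iterate_reflect hsymm (hJ hy) hk]⟩
    rw [mem_ball, Real.dist_eq] at hy ⊢
    rwa [show 2 * c - y - c = -(y - c) by ring, abs_neg]
  have hSJ : S ⊆ Icc 0 1 := inter_subset_left.trans hJ
  obtain ⟨ρ, hρ, hC⟩ := (hf.isOpen_inter_entryDom isOpen_ball hJ).exists_connectedComponentIn_eq_ball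
    (bddBelow_Icc.mono hSJ) (bddAbove_Icc.mono hSJ) hSsymm ⟨mem_ball_self hr, hc⟩
  have hCS : ball c ρ ⊆ S := hC ▸ connectedComponentIn_subset S c
  have hρr : ρ ≤ r := by
    have := hCS.trans inter_subset_left
    rw [Real.ball_eq_Ioo, Real.ball_eq_Ioo, Ioo_subset_Ioo_iff (by linarith)] at this
    linarith [this.2]
  refine ⟨ρ, hρ, hρr, hC, fun j hj hjJ => ?_⟩
  rcases hρr.lt_or_eq with hlt | rfl
  · -- otherwise `(c - ρ, c + ρ]` would be a connected subset of `S` through `c`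
    have hbS : c + ρ ∈ S := ⟨by rw [mem_ball, Real.dist_eq]; rwa [add_sub_cancel_left,
      abs_of_pos hρ], j, hj, hjJ⟩
    have hIoc : Ioc (c - ρ) (c + ρ) ⊆ ball c ρ := by
      rw [← hC]
      refine isPreconnected_Ioc.subset_connectedComponentIn ⟨by linarith, by linarith⟩ ?_
      intro y hy
      rcases hy.2.lt_or_eq with hy2 | rfl
      · exact hCS (by rw [Real.ball_eq_Ioo]; exact ⟨hy.1, hy2⟩)
      · exact hbS
    have := hIoc ⟨by linarith, le_rfl⟩
    rw [Real.ball_eq_Ioo] at this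
    exact lt_irrefl _ this.2
  · exact hnice j hj hjJ

end IsUnimodal

lemma preimDist_le {f : ℝ → ℝ} {c x : ℝ} {k : ℕ} (hx : x ∈ Icc (0 : ℝ) 1) (hfx : f^[k] x = c) :
    preimDist f c k ≤ |x - c| :=
  csInf_le ⟨0, by rintro _ ⟨y, -, rfl⟩; exact abs_nonneg _⟩ ⟨x, ⟨hx, hfx⟩, rfl⟩

lemma IsReturnDomain.eq_connectedComponentIn {f : ℝ → ℝ} {J C : Set ℝ} {c : ℝ}
    (hC : IsReturnDomain f J C) (hc : c ∈ C) : C = connectedComponentIn (J ∩ entryDom f J) c := by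
  obtain ⟨x, -, rfl⟩ := hC
  exact connectedComponentIn_eq hc

def PreimOrderBound (f : ℝ → ℝ) (c : ℝ) (k : ℕ) : Prop :=
  ∀ m, k < fibS (m + 1) → ∀ y ∈ Icc (0 : ℝ) 1, f^[k] y = c → preimDist f c (fibS m) ≤ |y - c|

structure TwoBranchNest (f : ℝ → ℝ) (c q : ℝ) (I : ℕ → Set ℝ) : Prop where
  unimodal : IsUnimodal f c
  symmetric : SymmetricAbout f c
  fixed : f q = q
  mem_Ioo : q ∈ Set.Ioo c 1
  first : I 1 = Set.Ioo (2 * c - q) q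
  central : ∀ k, 1 ≤ k → c ∈ I (k + 1) ∧ IsReturnDomain f (I k) (I (k + 1))
  branches : ∀ k, 1 ≤ k →
      ∃ I0 I1 : Set ℝ, c ∈ I0 ∧ I0 ≠ I1 ∧
        IsReturnDomain f (I k) I0 ∧ (I0 ∩ posOrbit f c).Nonempty ∧
        IsReturnDomain f (I k) I1 ∧ (I1 ∩ posOrbit f c).Nonempty ∧
        (∀ C, IsReturnDomain f (I k) C → (C ∩ posOrbit f c).Nonempty → C = I0 ∨ C = I1) ∧
        (∀ x ∈ I0, ReturnTimeEq f (I k) x (fibS (k + 1))) ∧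
        (∀ x ∈ I1, ReturnTimeEq f (I k) x (fibS k))
  critical_not_mem : ∀ k, 1 ≤ k → f^[fibS k] c ∉ I k

namespace TwoBranchNest

variable {f : ℝ → ℝ} {c q : ℝ} {I : ℕ → Set ℝ} (h : TwoBranchNest f c q I)
include h

lemma ball_subset_Icc {r : ℝ} (hrq : r ≤ q - c) : ball c r ⊆ Icc 0 1 := by
  intro y hy
  rw [Real.ball_eq_Ioo] at hy
  have hc := h.unimodal.eq_half h.symmetric
  have hq := h.mem_Ioo
  constructor <;> linarith [hy.1, hy.2, hq.1, hq.2]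

lemma exists_eq_ball {n : ℕ} (hn : 1 ≤ n) : ∃ r, 0 < r ∧ r ≤ q - c ∧ I n = ball c r ∧
    ∀ j, 1 ≤ j → f^[j] (c + r) ∉ I n := by
  induction n, hn using Nat.le_induction with
  | base =>
    have hI1 : I 1 = ball c (q - c) := by
      rw [h.first, Real.ball_eq_Ioo]
      congr 1 <;> ring
    refine ⟨q - c, sub_pos.2 h.mem_Ioo.1, le_rfl, hI1, fun j _ => ?_⟩
    rw [add_sub_cancel, Function.iterate_fixed h.fixed, h.first]
    exact fun hq => lt_irrefl q hq.2
  | succ n hn ih =>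
    obtain ⟨r, hr, hrq, hIn, hnice⟩ := ih
    obtain ⟨hc, hdom⟩ := h.central n hn
    have hC := hdom.eq_connectedComponentIn hc
    rw [hIn] at hC hnice
    have hcD : c ∈ entryDom f (ball c r) := ((hC ▸ connectedComponentIn_subset _ c) hc).2
    obtain ⟨ρ, hρ, hρr, hball, hnice'⟩ := h.unimodal.exists_connectedComponentIn_eq_ball
      h.symmetric hr (h.ball_subset_Icc hrq) hnice hcD
    rw [hC, hball]
    exact ⟨ρ, hρ, hρr.trans hrq, rfl, fun j hj hjI => hnice' j hj (ball_subset_ball hρr hjI)⟩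

lemma mem {n : ℕ} (hn : 1 ≤ n) : c ∈ I n := by
  obtain ⟨r, hr, -, hI, -⟩ := h.exists_eq_ball hn
  exact hI ▸ mem_ball_self hr

lemma subset_Icc {n : ℕ} (hn : 1 ≤ n) : I n ⊆ Icc 0 1 := by
  obtain ⟨r, -, hrq, hI, -⟩ := h.exists_eq_ball hn
  exact hI ▸ h.ball_subset_Icc hrq

lemma returnTimeEq_of_mem_succ {n : ℕ} (hn : 1 ≤ n) {x : ℝ} (hx : x ∈ I (n + 1)) :
    ReturnTimeEq f (I n) x (fibS (n + 1)) := by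
  obtain ⟨I0, -, hcI0, -, hI0, -, -, -, -, hret, -⟩ := h.branches n hn
  rw [hI0.eq_connectedComponentIn hcI0, ← (h.central n hn).2.eq_connectedComponentIn
    (h.central n hn).1] at hret
  exact hret x hx

lemma exists_iterate_fibS_mem {n : ℕ} (hn : 1 ≤ n) : ∃ y ∈ I n, f^[fibS n] y ∈ I n := by
  obtain ⟨-, I1, -, -, -, -, ⟨x, hx, rfl⟩, -, -, -, hret⟩ := h.branches n hn
  exact ⟨x, hx.1, (hret x (mem_connectedComponentIn hx)).2.1⟩

lemma lt_apply_of_mem_one {x : ℝ} (hx : x ∈ I 1) : q < f x := by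
  have hx01 := h.subset_Icc le_rfl hx
  rw [h.first] at hx
  wlog hxc : c ≤ x generalizing x
  · rw [← h.symmetric x hx01 (h.unimodal.reflect_mem_Icc h.symmetric hx01)]
    exact this ⟨by linarith [hx.2], by linarith [hx.1]⟩
      (h.unimodal.reflect_mem_Icc h.symmetric hx01) (by linarith)
  exact h.fixed ▸ h.unimodal.strictAntiOn ⟨hxc, hx01.2⟩ ⟨h.mem_Ioo.1.le, h.mem_Ioo.2.le⟩ hx.2

lemma iterate_ne_of_lt_fibS {n : ℕ} (hn : 1 ≤ n) {x : ℝ} (hx : x ∈ I n) {j : ℕ} (hj : 1 ≤ j)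
    (hjn : j < fibS n) : f^[j] x ≠ c := by
  obtain ⟨m, rfl⟩ := Nat.exists_eq_add_of_le' hn
  rcases m with _ | m
  · obtain rfl : j = 1 := by simp only [fibS] at hjn; omega
    exact (h.mem_Ioo.1.trans (h.lt_apply_of_mem_one hx)).ne'
  · intro hfx
    exact (h.returnTimeEq_of_mem_succ (by omega) hx).2.2 j hj hjn (hfx ▸ h.mem (by omega))

lemma iterate_ne_self {p : ℕ} (hp : 1 ≤ p) : f^[p] c ≠ c :=
  h.iterate_ne_of_lt_fibS (Nat.le_add_left 1 p) (h.mem (Nat.le_add_left 1 p)) hp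
    (fibS_strictMono.id_le (p + 1))

lemma preimage_nonempty (k : ℕ) : {x | x ∈ Icc (0 : ℝ) 1 ∧ f^[k] x = c}.Nonempty := by
  have hc1 := h.unimodal.center_mem.2
  have hq := h.mem_Ioo
  have hfc : f q < f c := h.unimodal.strictAntiOn ⟨le_rfl, hc1.le⟩ ⟨hq.1.le, hq.2.le⟩ hq.1
  obtain ⟨x, hx, hfx⟩ := h.unimodal.exists_iterate_eq (by linarith [h.fixed, h.mem_Ioo.1]) k
  exact ⟨x, ⟨hx.1, hx.2.trans hc1.le⟩, hfx⟩

lemma abs_sub_lt_preimDist (m : ℕ) {x : ℝ} (hx : x ∈ I (m + 1)) :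
    |x - c| < preimDist f c (fibS m) := by
  obtain ⟨r, -, -, hI, -⟩ := h.exists_eq_ball (Nat.le_add_left 1 m)
  obtain ⟨z, -, hfz, hd⟩ := h.unimodal.exists_preimDist_eq (h.preimage_nonempty (fibS m))
  have hz : z ∉ I (m + 1) := fun hz => h.iterate_ne_of_lt_fibS (Nat.le_add_left 1 m) hz
    (one_le_fibS m) (fibS_lt_fibS_succ m) hfz
  rw [hI, mem_ball, Real.dist_eq, not_lt] at hz
  rw [hI, mem_ball, Real.dist_eq] at hx
  linarith

lemma exists_iterate_fibS_eq {n : ℕ} (hn : 1 ≤ n) : ∃ x ∈ I n, f^[fibS n] x = c := by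
  obtain ⟨r, hr, hrq, hI, hnice⟩ := h.exists_eq_ball hn
  have hc : c ∈ Icc (0 : ℝ) 1 := h.subset_Icc hn (h.mem hn)
  have hb : c + r ∈ Icc (0 : ℝ) 1 := ⟨by linarith [hc.1], by linarith [h.mem_Ioo.2]⟩
  have hIoo : uIoo c (c + r) ⊆ I n := by
    rw [uIoo_of_le (by linarith), hI, Real.ball_eq_Ioo]
    exact Ioo_subset_Ioo_left (by linarith)
  have hmono := h.unimodal.monotoneOn_or_antitoneOn_iterate hc hb (m := fibS n)
    fun x hx j hj => by
      rcases Nat.eq_zero_or_pos j with rfl | hj0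
      · exact fun hxc => left_notMem_uIoo (hxc ▸ hx)
      · exact h.iterate_ne_of_lt_fibS hn (hIoo hx) hj0 hj
  obtain ⟨y, hy, hfy⟩ : ∃ y ∈ uIcc c (c + r), f^[fibS n] y ∈ I n := by
    obtain ⟨y, hyI, hfy⟩ := h.exists_iterate_fibS_mem hn
    have hy01 := h.subset_Icc hn hyI
    rw [hI, mem_ball, Real.dist_eq, abs_lt] at hyI
    rw [uIcc_of_le (by linarith)]
    rcases le_total c y with hcy | hyc
    · exact ⟨y, ⟨hcy, by linarith⟩, hfy⟩
    · exact ⟨2 * c - y, ⟨by linarith, by linarith⟩,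
        by rwa [h.unimodal.iterate_reflect h.symmetric hy01 (one_le_fibS n)]⟩
  have hcmem : c ∈ uIcc (f^[fibS n] c) (f^[fibS n] (c + r)) :=
    center_mem_uIcc_of_mem_ball (hmono.elim (·.mapsTo_uIcc) (·.mapsTo_uIcc) hy) (hI ▸ hfy)
      (hI ▸ h.critical_not_mem n hn) (hI ▸ hnice _ (one_le_fibS n))
  obtain ⟨x, hx, hfx⟩ := exists_mem_uIoo_eq
    ((h.unimodal.continuousOn_iterate _).mono (uIcc_subset_Icc hc hb)) hcmem
    (h.iterate_ne_self (one_le_fibS n))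
    (fun hβ => hnice _ (one_le_fibS n) (by rw [hβ]; exact h.mem hn))
  exact ⟨x, hIoo hx, hfx⟩

lemma preimDist_fibS_succ_lt (i : ℕ) :
    preimDist f c (fibS (i + 1)) < preimDist f c (fibS i) := by
  obtain ⟨x, hx, hfx⟩ := h.exists_iterate_fibS_eq (Nat.le_add_left 1 i)
  exact (preimDist_le (h.subset_Icc (Nat.le_add_left 1 i) hx) hfx).trans_lt
    (h.abs_sub_lt_preimDist i hx)

lemma strictAnti_preimDist_fibS : StrictAnti fun i => preimDist f c (fibS i) :=
  strictAnti_nat_of_succ_lt h.preimDist_fibS_succ_lt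

lemma monotoneOn_or_antitoneOn_iterate_fibS {i : ℕ}
    (IH : ∀ k < fibS (i + 1), 1 ≤ k → PreimOrderBound f c k) {z : ℝ} (hz : z ∈ Icc (0 : ℝ) 1)
    (hcz : c ≤ z) (hzd : z - c = preimDist f c (fibS (i + 1))) :
    MonotoneOn f^[fibS (i + 1)] (uIcc c z) ∨ AntitoneOn f^[fibS (i + 1)] (uIcc c z) := by
  have hc : c ∈ Icc (0 : ℝ) 1 := h.subset_Icc le_rfl (h.mem le_rfl)
  refine h.unimodal.monotoneOn_or_antitoneOn_iterate hc hz fun u hu j hj hfu => ?_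
  rw [uIoo_of_le hcz] at hu
  rcases Nat.eq_zero_or_pos j with rfl | hj0
  · exact hu.1.ne' hfu
  · have hu' := IH j hj hj0 i hj u ⟨by linarith [hc.1, hu.1], by linarith [hz.2, hu.2]⟩ hfu
    rw [abs_of_pos (sub_pos.2 hu.1)] at hu'
    linarith [hu.2, h.strictAnti_preimDist_fibS (Nat.lt_succ_self i)]

lemma preimDist_fibS_le_abs_of_forall_lt {k i : ℕ}
    (IH : ∀ k' < k, 1 ≤ k' → PreimOrderBound f c k') (hik : fibS i ≤ k) (hki : k < fibS (i + 1))
    {x : ℝ} (hx : x ∈ Icc (0 : ℝ) 1) (hfx : f^[k] x = c) : preimDist f c (fibS i) ≤ |x - c| := by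
  rcases hik.eq_or_lt with hik | hik
  · exact preimDist_le hx (hik ▸ hfx)
  have hi : 2 ≤ i := by
    by_contra! hi
    interval_cases i <;> simp only [fibS] at hik hki <;> omega
  obtain ⟨j, rfl⟩ := Nat.exists_eq_add_of_le' hi
  wlog hxc : c ≤ x generalizing x
  · have hk : 1 ≤ k := (one_le_fibS _).trans hik.le
    have h' := this (h.unimodal.reflect_mem_Icc h.symmetric hx)
      (by rwa [h.unimodal.iterate_reflect h.symmetric hx hk]) (by linarith)
    rwa [show 2 * c - x - c = -(x - c) by ring, abs_neg] at h'
  by_contra! hlt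
  rw [abs_of_nonneg (sub_nonneg.2 hxc)] at hlt
  obtain ⟨z, hz, hfz, hcz, hzd⟩ := h.unimodal.exists_preimDist_eq_right h.symmetric
    (one_le_fibS _) (h.preimage_nonempty _)
  have hmono := h.monotoneOn_or_antitoneOn_iterate_fibS (fun k' hk' => IH k' (hk'.trans hik))
    hz hcz hzd
  have hw : f^[fibS (j + 2)] x ∈ uIcc (f^[fibS (j + 2)] c) c := hfz ▸
    hmono.elim (·.mapsTo_uIcc) (·.mapsTo_uIcc) (by rw [uIcc_of_le hcz]; exact ⟨hxc, by linarith⟩)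
  have hcS := h.abs_sub_lt_preimDist j
    (h.returnTimeEq_of_mem_succ (Nat.le_add_left 1 j) (h.mem (Nat.le_add_left 1 (j + 1)))).2.1
  have hfw : f^[k - fibS (j + 2)] (f^[fibS (j + 2)] x) = c := by
    rw [← Function.iterate_add_apply, Nat.sub_add_cancel hik.le, hfx]
  have hS : fibS (j + 2 + 1) = fibS (j + 2) + fibS (j + 1) := rfl
  have hwd := IH _ (by have := one_le_fibS (j + 2); omega) (by omega) j (by omega) _
    (h.unimodal.mapsTo_iterate _ hx) hfw
  have hwc := abs_sub_right_of_mem_uIcc hw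
  rw [abs_sub_comm c, abs_sub_comm c] at hwc
  linarith

theorem preimOrderBound {k : ℕ} (hk : 1 ≤ k) : PreimOrderBound f c k := by
  induction k using Nat.strong_induction_on with
  | _ k IH =>
    intro m hkm x hx hfx
    obtain ⟨i, hik, hki⟩ := exists_fibS_le_lt hk
    have him : i ≤ m := Nat.lt_succ_iff.1 (fibS_strictMono.lt_iff_lt.1 (hik.trans_lt hkm))
    exact (h.strictAnti_preimDist_fibS.antitone him).trans
      (h.preimDist_fibS_le_abs_of_forall_lt IH hik hki hx hfx)

end TwoBranchNest

/-- Converse: if a symmetric unimodal map has, at every level `k ≥ 1` of the principal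
nest starting from `I¹ = (q̂, q)`, exactly two return domains meeting the forward critical
orbit with return times `S_{k+1}` (on the central one) and `S_k`, and `f^{S_k}(c) ∉ Iᵏ`,
then `f` is a Fibonacci map. -/
theorem fibonacci_of_two_return_branches (f : ℝ → ℝ) (c q : ℝ) (I : ℕ → Set ℝ)
    (hf : IsUnimodal f c) (hsymm : SymmetricAbout f c)
    (hq : f q = q) (hqI : q ∈ Set.Ioo c 1)
    (hI1 : I 1 = Set.Ioo (2 * c - q) q)
    (hI : ∀ k, 1 ≤ k → c ∈ I (k + 1) ∧ IsReturnDomain f (I k) (I (k + 1)))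
    (hbranch : ∀ k, 1 ≤ k →
      ∃ I0 I1 : Set ℝ, c ∈ I0 ∧ I0 ≠ I1 ∧
        IsReturnDomain f (I k) I0 ∧ (I0 ∩ posOrbit f c).Nonempty ∧
        IsReturnDomain f (I k) I1 ∧ (I1 ∩ posOrbit f c).Nonempty ∧
        (∀ C, IsReturnDomain f (I k) C → (C ∩ posOrbit f c).Nonempty → C = I0 ∨ C = I1) ∧
        (∀ x ∈ I0, ReturnTimeEq f (I k) x (fibS (k + 1))) ∧
        (∀ x ∈ I1, ReturnTimeEq f (I k) x (fibS k)))
    (hnotin : ∀ k, 1 ≤ k → f^[fibS k] c ∉ I k) :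
    IsFibonacciMap f c := by
  have h : TwoBranchNest f c q I := ⟨hf, hsymm, hq, hqI, hI1, hI, hbranch, hnotin⟩
  refine ⟨hf, hsymm, rfl, fun i => ⟨⟨(fibS_strictMono (Nat.lt_succ_self i)).le,
    h.preimage_nonempty _, h.preimDist_fibS_succ_lt i⟩, ?_⟩⟩
  rintro k ⟨hik, hne, hlt⟩
  by_contra! hki
  obtain ⟨z, hz, hfz, hd⟩ := hf.exists_preimDist_eq hne
  exact hlt.not_ge (hd ▸ h.preimOrderBound ((one_le_fibS i).trans hik) i hki z hz hfz)
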